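/- Let $G = \mathrm{SU}(2)$ with $\widehat{G} = \{\pi_n : n \ge 0\}$, $d_{\pi_n} = n+1$, and consider the Lie derivative point derivation $D$ at the identity along the torus direction, whose matricial coefficients are $D_{\pi_n} = i\,\mathrm{diag}(n, n-2, \dots, 2-n, -n)$. For $\alpha \ge 0$ and $1 \le p \le \infty$ with conjugate exponent $p'$, $D$ extends to a bounded linear functional on $\mathrm{A}^p(\mathrm{SU}(2), d^\alpha)$, i.e., $\sup_n (n+1)^{-\alpha - 1/p'}\|D_{\pi_n}\|_{\mathrm{S}^{p'}_{n+1}} < \infty$, if and only if $\alpha \ge 1$. -/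

import Mathlib

open scoped ENNReal

/-- The singular values of a complex square matrix: square roots of the eigenvalues of `Aᴴ * A`. -/
noncomputable def singularValues {n : Type*} [Fintype n] [DecidableEq n]
    (A : Matrix n n ℂ) : n → ℝ :=
  fun i => Real.sqrt ((Matrix.isHermitian_conjTranspose_mul_self A).eigenvalues i)

/-- The Schatten `p`-norm of a complex square matrix, i.e. the `ℓ^p` norm of its
singular values (with the supremum when `p = ∞`). -/
noncomputable def schattenNorm {n : Type*} [Fintype n] [DecidableEq n]
    (p : ℝ≥0∞) (A : Matrix n n ℂ) : ℝ :=
  if p = ∞ then ⨆ i, singularValues A i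
  else (∑ i, singularValues A i ^ p.toReal) ^ (1 / p.toReal)


/-!
The singular values of `D_{π_n}` are the numbers `|n - 2j|`, `0 ≤ j ≤ n`, so its Schatten
`q`-norm is the `ℓ^q` norm of this family. All `n + 1` entries are at most `n + 1`, and for
`n ≥ 1` the `⌊n/4⌋ + 1 ≥ (n + 1)/4` entries with `4j ≤ n` are at least `(n + 1)/4`. Hence the
norm is comparable to `(n + 1)^(1 + 1/q)` and the weighted sequence to `(n + 1)^(1 - α)`, which
is bounded iff `α ≥ 1`. Since `(∞ : ℝ≥0∞).toReal = 0` and `1 / 0 = 0` in Lean, the case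
`q = ∞` fits the same exponent.
-/

open Matrix Finset

lemma Matrix.IsHermitian.univ_map_eigenvalues_of_eq_diagonal {n : Type*} [Fintype n]
    [DecidableEq n] {B : Matrix n n ℂ} (hB : B.IsHermitian) {d : n → ℝ}
    (h : B = diagonal fun i ↦ (d i : ℂ)) :
    univ.val.map hB.eigenvalues = univ.val.map d := by
  subst h
  apply Multiset.map_injective Complex.ofReal_injective
  have := hB.roots_charpoly_eq_eigenvalues
  rw [charpoly_diagonal, Polynomial.roots_prod _ _ (prod_ne_zero_iff.mpr fun i _ ↦
    Polynomial.X_sub_C_ne_zero _)] at this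
  simpa [Multiset.map_map] using this.symm

lemma univ_map_singularValues_diagonal {n : Type*} [Fintype n] [DecidableEq n] (d : n → ℂ) :
    univ.val.map (singularValues (diagonal d)) = univ.val.map fun i ↦ ‖d i‖ := by
  have hsq : (diagonal d)ᴴ * diagonal d = diagonal fun i ↦ ((‖d i‖ ^ 2 : ℝ) : ℂ) := by
    rw [diagonal_conjTranspose, diagonal_mul_diagonal]
    congr 1
    funext i
    simp [Complex.conj_mul']
  have hH := isHermitian_conjTranspose_mul_self (diagonal d)
  have : singularValues (diagonal d) = Real.sqrt ∘ hH.eigenvalues := rfl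
  rw [this, ← Multiset.map_map, hH.univ_map_eigenvalues_of_eq_diagonal hsq, Multiset.map_map]
  simp

noncomputable def finLpNorm {ι : Type*} [Fintype ι] (p : ℝ≥0∞) (s : ι → ℝ) : ℝ :=
  if p = ∞ then ⨆ i, s i else (∑ i, s i ^ p.toReal) ^ (1 / p.toReal)

lemma sum_const_rpow_rpow_one_div {ι : Type*} (S : Finset ι) {a t : ℝ} (ha : 0 ≤ a)
    (ht : t ≠ 0) : (∑ _i ∈ S, a ^ t) ^ (1 / t) = (#S : ℝ) ^ (1 / t) * a := by
  rw [sum_const, nsmul_eq_mul, Real.mul_rpow (Nat.cast_nonneg _) (Real.rpow_nonneg ha _),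
    ← Real.rpow_mul ha, mul_one_div_cancel ht, Real.rpow_one]

section finLpNorm

variable {ι : Type*} [Fintype ι] {p : ℝ≥0∞} {s : ι → ℝ} {a : ℝ}

lemma finLpNorm_congr {s' : ι → ℝ} (h : univ.val.map s = univ.val.map s') :
    finLpNorm p s = finLpNorm p s' := by
  have hrange : Set.range s = Set.range s' := by
    ext x
    simpa using congrArg (x ∈ ·) h
  have hsum : ∑ i, s i ^ p.toReal = ∑ i, s' i ^ p.toReal := by
    rw [sum_eq_multiset_sum, sum_eq_multiset_sum]
    simpa [Multiset.map_map, Function.comp_def] using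
      congrArg (fun m ↦ (m.map (· ^ p.toReal)).sum) h
  simp only [finLpNorm, iSup, hrange, hsum]

lemma finLpNorm_le (hp : p ≠ 0) (hs : ∀ i, 0 ≤ s i) (ha : 0 ≤ a) (h : ∀ i, s i ≤ a) :
    finLpNorm p s ≤ (Fintype.card ι : ℝ) ^ (1 / p.toReal) * a := by
  unfold finLpNorm
  split_ifs with hp_top
  · simpa [hp_top] using Real.iSup_le h ha
  have ht : 0 < p.toReal := ENNReal.toReal_pos hp hp_top
  calc (∑ i, s i ^ p.toReal) ^ (1 / p.toReal)
      ≤ (∑ _i, a ^ p.toReal) ^ (1 / p.toReal) := by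
        gcongr with i
        · exact sum_nonneg fun i _ ↦ Real.rpow_nonneg (hs i) _
        · exact hs i
        · exact h i
    _ = _ := by rw [sum_const_rpow_rpow_one_div _ ha ht.ne', card_univ]

lemma le_finLpNorm (hp : p ≠ 0) (hs : ∀ i, 0 ≤ s i) (ha : 0 ≤ a) {S : Finset ι}
    (hS : S.Nonempty) (h : ∀ i ∈ S, a ≤ s i) :
    (#S : ℝ) ^ (1 / p.toReal) * a ≤ finLpNorm p s := by
  unfold finLpNorm
  split_ifs with hp_top
  · obtain ⟨i, hi⟩ := hS
    simpa [hp_top] using (h i hi).trans (le_ciSup (Set.finite_range s).bddAbove i)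
  have ht : 0 < p.toReal := ENNReal.toReal_pos hp hp_top
  calc (#S : ℝ) ^ (1 / p.toReal) * a
      = (∑ _i ∈ S, a ^ p.toReal) ^ (1 / p.toReal) :=
        (sum_const_rpow_rpow_one_div _ ha ht.ne').symm
    _ ≤ (∑ i ∈ S, s i ^ p.toReal) ^ (1 / p.toReal) := by
        gcongr with i hi
        exact h i hi
    _ ≤ (∑ i, s i ^ p.toReal) ^ (1 / p.toReal) := by
        gcongr
        · exact sum_nonneg fun i _ ↦ Real.rpow_nonneg (hs i) _
        · exact fun i _ _ ↦ Real.rpow_nonneg (hs i) _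
        · exact subset_univ S

end finLpNorm

lemma schattenNorm_diagonal {n : Type*} [Fintype n] [DecidableEq n] (p : ℝ≥0∞) (d : n → ℂ) :
    schattenNorm p (diagonal d) = finLpNorm p fun i ↦ ‖d i‖ :=
  finLpNorm_congr (univ_map_singularValues_diagonal d)

lemma finLpNorm_abs_sub_two_mul_le {q : ℝ≥0∞} (hq : q ≠ 0) (n : ℕ) :
    finLpNorm q (fun j : Fin (n + 1) ↦ |(n : ℝ) - 2 * (j : ℕ)|) ≤
      ((n : ℝ) + 1) ^ (1 + 1 / q.toReal) := by
  have hbound (j : Fin (n + 1)) : |(n : ℝ) - 2 * (j : ℕ)| ≤ n + 1 := by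
    have hj : ((j : ℕ) : ℝ) ≤ n := by exact_mod_cast Nat.lt_succ_iff.mp j.isLt
    rw [abs_le]
    constructor <;> linarith [Nat.cast_nonneg (α := ℝ) j]
  refine (finLpNorm_le hq (fun _ ↦ abs_nonneg _) (by positivity) hbound).trans_eq ?_
  rw [Fintype.card_fin, Nat.cast_succ, add_comm 1, Real.rpow_add_one (by positivity)]

lemma le_finLpNorm_abs_sub_two_mul {q : ℝ≥0∞} (hq : q ≠ 0) {n : ℕ} (hn : 1 ≤ n) :
    (((n : ℝ) + 1) / 4) ^ (1 + 1 / q.toReal) ≤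
      finLpNorm q (fun j : Fin (n + 1) ↦ |(n : ℝ) - 2 * (j : ℕ)|) := by
  set S : Finset (Fin (n + 1)) :=
    (range (n / 4 + 1)).attachFin fun m hm ↦ by rw [mem_range] at hm; omega
  have hS (j) (hj : j ∈ S) : ((n : ℝ) + 1) / 4 ≤ |(n : ℝ) - 2 * (j : ℕ)| := by
    rw [mem_attachFin, mem_range] at hj
    have : 4 * ((j : ℕ) : ℝ) ≤ n := by exact_mod_cast (by omega : 4 * (j : ℕ) ≤ n)
    have : (1 : ℝ) ≤ n := by exact_mod_cast hn
    linarith [le_abs_self ((n : ℝ) - 2 * (j : ℕ))]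
  have hcard : ((n : ℝ) + 1) / 4 ≤ #S := by
    have : (n : ℝ) + 1 ≤ 4 * (n / 4 + 1 : ℕ) := by
      exact_mod_cast (by omega : n + 1 ≤ 4 * (n / 4 + 1))
    rw [card_attachFin, card_range]
    linarith
  refine le_trans ?_ (le_finLpNorm hq (fun _ ↦ abs_nonneg _) (by positivity)
    ⟨⟨0, n.succ_pos⟩, by simp [S]⟩ hS)
  rw [add_comm 1, Real.rpow_add_one (by positivity)]
  gcongr

open Filter in
lemma exists_forall_rpow_mul_le_iff {g : ℕ → ℝ} {γ c : ℝ} (hc : 0 < c)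
    (hlow : ∀ᶠ n : ℕ in atTop, c * ((n : ℝ) + 1) ^ γ ≤ g n)
    (hup : ∀ n, g n ≤ ((n : ℝ) + 1) ^ γ) (δ : ℝ) :
    (∃ M : ℝ, ∀ n : ℕ, ((n : ℝ) + 1) ^ δ * g n ≤ M) ↔ γ + δ ≤ 0 := by
  have hsplit (n : ℕ) : ((n : ℝ) + 1) ^ (γ + δ) = ((n : ℝ) + 1) ^ δ * ((n : ℝ) + 1) ^ γ := by
    rw [Real.rpow_add (by positivity), mul_comm]
  constructor
  · rintro ⟨M, hM⟩
    by_contra! hpos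
    have hgrow : Tendsto (fun n : ℕ ↦ c * ((n : ℝ) + 1) ^ (γ + δ)) atTop atTop :=
      ((tendsto_rpow_atTop hpos).comp
        (tendsto_atTop_add_const_right _ 1 tendsto_natCast_atTop_atTop)).const_mul_atTop hc
    obtain ⟨n, hn, hMn⟩ := (hlow.and (hgrow.eventually_gt_atTop M)).exists
    have : c * ((n : ℝ) + 1) ^ (γ + δ) ≤ ((n : ℝ) + 1) ^ δ * g n := by
      rw [hsplit, mul_left_comm]
      gcongr
    linarith [hM n]
  · intro hnonpos
    refine ⟨1, fun n ↦ ?_⟩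
    calc ((n : ℝ) + 1) ^ δ * g n ≤ ((n : ℝ) + 1) ^ (γ + δ) := by
          rw [hsplit]
          gcongr
          exact hup n
      _ ≤ 1 := Real.rpow_le_one_of_one_le_of_nonpos (by simp) hnonpos

theorem su2_derivation_bounded_iff_general (α : ℝ) (p q : ℝ≥0∞)
    (hpq : 1 / p + 1 / q = 1) :
    (∃ M : ℝ, ∀ n : ℕ,
      ((n : ℝ) + 1) ^ (-α - 1 / q.toReal) *
        schattenNorm q (Matrix.diagonal fun j : Fin (n + 1) =>
          Complex.I * Complex.ofReal ((n : ℝ) - 2 * ((j : ℕ) : ℝ))) ≤ M) ↔ 1 ≤ α := by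
  have hq : q ≠ 0 := by
    rintro rfl
    simp at hpq
  simp only [schattenNorm_diagonal, norm_mul, Complex.norm_I, one_mul, Complex.norm_real,
    Real.norm_eq_abs]
  have hlow : ∀ᶠ n : ℕ in Filter.atTop,
      (4 : ℝ) ^ (-(1 + 1 / q.toReal)) * ((n : ℝ) + 1) ^ (1 + 1 / q.toReal) ≤
        finLpNorm q fun j : Fin (n + 1) ↦ |(n : ℝ) - 2 * (j : ℕ)| := by
    filter_upwards [Filter.eventually_ge_atTop 1] with n hn
    rw [Real.rpow_neg (by norm_num), ← div_eq_inv_mul,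
      ← Real.div_rpow (by positivity) (by norm_num)]
    exact le_finLpNorm_abs_sub_two_mul hq hn
  rw [exists_forall_rpow_mul_le_iff (by positivity) hlow (finLpNorm_abs_sub_two_mul_le hq)]
  constructor <;> intro h <;> linarith

/-- For `SU(2)`, the Lie derivative point derivation `D` along the torus direction, with
matricial coefficients `D_{π_n} = i diag(n, n-2, …, 2-n, -n)`, extends to a bounded linear
functional on `A^p(SU(2), d^α)` — i.e. `sup_n (n+1)^{-α-1/p'} ‖D_{π_n}‖_{S^{p'}_{n+1}} < ∞`
where `p'` is the conjugate exponent of `p` — if and only if `α ≥ 1`. -/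
theorem su2_derivation_bounded_iff (α : ℝ) (hα : 0 ≤ α) (p q : ℝ≥0∞) (hp : 1 ≤ p)
    (hpq : 1 / p + 1 / q = 1) :
    (∃ M : ℝ, ∀ n : ℕ,
      ((n : ℝ) + 1) ^ (-α - 1 / q.toReal) *
        schattenNorm q (Matrix.diagonal fun j : Fin (n + 1) =>
          Complex.I * Complex.ofReal ((n : ℝ) - 2 * ((j : ℕ) : ℝ))) ≤ M) ↔ 1 ≤ α :=
  su2_derivation_bounded_iff_general α p q hpq
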